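/- Under the full-convexity assumptions on Φ(x) = f(x) + g(c(x)), if x and x' are both stationary points of the problem (each admitting a multiplier), then their multiplier sets coincide: Y(x) = Y(x'), where Y(x̄) := { y ∈ ∂g(c(x̄)) : ∇f(x̄) + c'(x̄)ᵀy = 0 }. -/

import Mathlib

open scoped RealInnerProductSpace

noncomputable section

abbrev Eu (m : ℕ) := EuclideanSpace ℝ (Fin m)

def EProper {E : Type*} (φ : E → EReal) : Prop :=
  (∃ x, φ x ≠ ⊤) ∧ ∀ x, φ x ≠ ⊥

def EConvexOn {E : Type*} [AddCommGroup E] [Module ℝ E] (φ : E → EReal) : Prop :=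
  ∀ x y : E, ∀ a b : ℝ, 0 ≤ a → 0 ≤ b → a + b = 1 →
    φ (a • x + b • y) ≤ (a : EReal) * φ x + (b : EReal) * φ y

def edom {E : Type*} (φ : E → EReal) : Set E := {x | φ x ≠ ⊤}

def hzn {E : Type*} [AddCommGroup E] (φ : E → EReal) : Set E :=
  {v | ∀ z ∈ edom φ, φ (z + v) ≤ φ z}

/-- `c` is `(-hzn g)`-convex. -/
def HznConvex {n m : ℕ} (g : Eu m → EReal) (c : Eu n → Eu m) : Prop :=
  ∀ x xp : Eu n, ∀ l : ℝ, 0 ≤ l → l ≤ 1 →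
    c (l • x + (1 - l) • xp) - l • c x - (1 - l) • c xp ∈ hzn g

/-- Convex (Fenchel) conjugate. -/
def econj {m : ℕ} (φ : Eu m → EReal) (y : Eu m) : EReal :=
  ⨆ z, ((inner ℝ z y : ℝ) : EReal) - φ z

/-- Convex subdifferential of an extended-real-valued function. -/
def esubdiff {m : ℕ} (g : Eu m → EReal) (z₀ : Eu m) : Set (Eu m) :=
  {y | ∀ z, g z₀ + ((inner ℝ y (z - z₀) : ℝ) : EReal) ≤ g z}

/-- The set of Lagrange multipliers associated with `xb`. -/
def multSet {n m : ℕ} (f : Eu n → ℝ) (g : Eu m → EReal) (c : Eu n → Eu m)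
    (xb : Eu n) : Set (Eu m) :=
  {y | y ∈ esubdiff g (c xb) ∧
    ∀ d : Eu n, fderiv ℝ f xb d + (inner ℝ y (fderiv ℝ c xb d) : ℝ) = 0}

/-- First-order optimality for convex functions: a critical point is a global minimizer. -/
lemma convexOn_min_of_hasFDerivAt_zero {E : Type*} [NormedAddCommGroup E] [NormedSpace ℝ E]
    {φ : E → ℝ} (hconv : ConvexOn ℝ Set.univ φ) {x₀ : E}
    (hd : HasFDerivAt φ (0 : E →L[ℝ] ℝ) x₀) (u : E) : φ x₀ ≤ φ u := by
  set ψ : ℝ → ℝ := fun t => φ (x₀ + t • (u - x₀)) with hψdef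
  have hcurve : HasDerivAt (fun s : ℝ => x₀ + s • (u - x₀)) (u - x₀) 0 := by
    simpa using ((hasDerivAt_id (0:ℝ)).smul_const (u - x₀)).const_add x₀
  have h0 : x₀ + (0:ℝ) • (u - x₀) = x₀ := by simp
  have hψd : HasDerivAt ψ ((0 : E →L[ℝ] ℝ) (u - x₀)) 0 :=
    HasFDerivAt.comp_hasDerivAt 0
      (show HasFDerivAt φ (0 : E →L[ℝ] ℝ) (x₀ + (0:ℝ) • (u - x₀)) by rwa [h0]) hcurve
  have hψd0 : HasDerivAt ψ 0 0 := by simpa using hψd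
  have hslope : Filter.Tendsto (slope ψ 0) (nhdsWithin 0 (Set.Ioi 0)) (nhds 0) :=
    (hasDerivAt_iff_tendsto_slope.1 hψd0).mono_left
      (nhdsWithin_mono _ fun t ht => ne_of_gt ht)
  have hev : ∀ᶠ t in nhdsWithin (0:ℝ) (Set.Ioi 0), slope ψ 0 t ≤ φ u - φ x₀ := by
    filter_upwards [Ioc_mem_nhdsGT_of_mem (Set.mem_Ico.2 ⟨le_refl (0:ℝ), one_pos⟩)] with t ht
    obtain ⟨ht0, ht1⟩ := ht
    have hcomb := hconv.2 (Set.mem_univ x₀) (Set.mem_univ u)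
      (show (0:ℝ) ≤ 1 - t by linarith) (le_of_lt ht0) (by ring)
    have harg : (1 - t) • x₀ + t • u = x₀ + t • (u - x₀) := by module
    rw [harg] at hcomb
    have hψt : ψ t ≤ (1 - t) * φ x₀ + t * φ u := hcomb
    have hψ0 : ψ 0 = φ x₀ := by simp [hψdef]
    rw [slope_def_field]
    rw [div_le_iff₀ (by linarith : (0:ℝ) < t - 0)]
    rw [hψ0]
    nlinarith
  have hfin := le_of_tendsto hslope hev
  linarith

/-- A proper function is finite at any subdifferentiable point. -/
lemma esubdiff_finite {m : ℕ} {g : Eu m → EReal} (hgp : EProper g) {z₀ y : Eu m}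
    (hy : y ∈ esubdiff g z₀) : ∃ r : ℝ, g z₀ = (r : EReal) := by
  obtain ⟨z₁, hz₁⟩ := hgp.1
  have hne : g z₀ ≠ ⊤ := by
    intro htop
    have h := hy z₁
    rw [htop] at h
    have htop' : (⊤ : EReal) ≤ g z₁ := by
      rw [show (⊤ : EReal) + ((inner ℝ y (z₁ - z₀) : ℝ) : EReal) = ⊤ from
        EReal.top_add_of_ne_bot (EReal.coe_ne_bot _)] at h
      exact h
    exact hz₁ (top_le_iff.1 htop')
  exact ⟨(g z₀).toReal, (EReal.coe_toReal hne (hgp.2 z₀)).symm⟩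

/-- Subgradients pair nonpositively with horizon directions. -/
lemma esubdiff_inner_hzn_nonpos {m : ℕ} {g : Eu m → EReal} {z₀ y : Eu m} {r : ℝ}
    (hy : y ∈ esubdiff g z₀) (hr : g z₀ = (r : EReal)) {v : Eu m} (hv : v ∈ hzn g) :
    ⟪y, v⟫ ≤ 0 := by
  have hdom : z₀ ∈ edom g := by
    simp only [edom, Set.mem_setOf_eq, hr]
    exact EReal.coe_ne_top r
  have h1 : g (z₀ + v) ≤ (r : EReal) := hr ▸ hv z₀ hdom
  have h2 := hy (z₀ + v)
  rw [hr, add_sub_cancel_left, ← EReal.coe_add] at h2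
  have h3 := le_trans h2 h1
  rw [EReal.coe_le_coe_iff] at h3
  linarith

/-- Convexity of `u ↦ f u + ⟪y, c u⟫` when `⟪y, ·⟫` is nonpositive on horizon directions. -/
lemma lagr_convex {n m : ℕ} {f : Eu n → ℝ} {g : Eu m → EReal} {c : Eu n → Eu m}
    (hfc : ConvexOn ℝ Set.univ f) (hcK : HznConvex g c) {y : Eu m}
    (hy : ∀ v ∈ hzn g, ⟪y, v⟫ ≤ 0) :
    ConvexOn ℝ Set.univ (fun u => f u + ⟪y, c u⟫) := by
  refine ⟨convex_univ, ?_⟩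
  intro u _ u' _ a b ha hb hab
  have hb' : b = 1 - a := by linarith
  have hw : c (a • u + (1 - a) • u') - a • c u - (1 - a) • c u' ∈ hzn g :=
    hcK u u' a ha (by linarith)
  have hyw := hy _ hw
  set w := c (a • u + (1 - a) • u') - a • c u - (1 - a) • c u' with hwdef
  have hcc : c (a • u + b • u') = a • c u + b • c u' + w := by
    rw [hb', hwdef]; abel
  have hinner : ⟪y, c (a • u + b • u')⟫ = a * ⟪y, c u⟫ + b * ⟪y, c u'⟫ + ⟪y, w⟫ := by
    rw [hcc, inner_add_right, inner_add_right, real_inner_smul_right, real_inner_smul_right]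
  have hfpart := hfc.2 (Set.mem_univ u) (Set.mem_univ u') ha hb hab
  simp only []
  rw [hinner]
  simp only [smul_eq_mul] at hfpart ⊢
  nlinarith [hfpart]

/-- Derivative of the partial Lagrangian. -/
lemma lagr_hasFDerivAt {n m : ℕ} {f : Eu n → ℝ} {c : Eu n → Eu m}
    (hf : ContDiff ℝ 1 f) (hc : ContDiff ℝ 1 c) (y : Eu m) (u : Eu n) :
    HasFDerivAt (fun u => f u + ⟪y, c u⟫)
      (fderiv ℝ f u + (innerSL ℝ y).comp (fderiv ℝ c u)) u := by
  have hfd : HasFDerivAt f (fderiv ℝ f u) u := (hf.differentiable one_ne_zero u).hasFDerivAt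
  have hcd : HasFDerivAt c (fderiv ℝ c u) u := (hc.differentiable one_ne_zero u).hasFDerivAt
  have hinner : HasFDerivAt (fun u => ⟪y, c u⟫) ((innerSL ℝ y).comp (fderiv ℝ c u)) u :=
    (innerSL ℝ y).hasFDerivAt.comp u hcd
  exact hfd.add hinner

/-- One inclusion between multiplier sets at two stationary points. -/
lemma multSet_subset {n m : ℕ} {f : Eu n → ℝ} {g : Eu m → EReal} {c : Eu n → Eu m}
    (hf : ContDiff ℝ 1 f) (hfc : ConvexOn ℝ Set.univ f) (hgp : EProper g)
    (hc : ContDiff ℝ 1 c) (hcK : HznConvex g c) {x xp : Eu n} {y y' : Eu m}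
    (hy : y ∈ multSet f g c x) (hy' : y' ∈ multSet f g c xp) :
    y ∈ multSet f g c xp := by
  obtain ⟨hysub, hystat⟩ := hy
  obtain ⟨hy'sub, hy'stat⟩ := hy'
  obtain ⟨r, hr⟩ := esubdiff_finite hgp hysub
  obtain ⟨r', hr'⟩ := esubdiff_finite hgp hy'sub
  have hyv : ∀ v ∈ hzn g, ⟪y, v⟫ ≤ 0 := fun v hv => esubdiff_inner_hzn_nonpos hysub hr hv
  have hy'v : ∀ v ∈ hzn g, ⟪y', v⟫ ≤ 0 := fun v hv => esubdiff_inner_hzn_nonpos hy'sub hr' hv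
  have hφconv := lagr_convex hfc hcK hyv
  have hφ'conv := lagr_convex hfc hcK hy'v
  -- φ_y has a critical point at x, hence x is a global min of φ_y
  have hL0 : (fderiv ℝ f x + (innerSL ℝ y).comp (fderiv ℝ c x)) = 0 := by
    refine ContinuousLinearMap.ext fun d => ?_
    simpa [ContinuousLinearMap.add_apply, ContinuousLinearMap.comp_apply] using hystat d
  have hmin : ∀ u, f x + ⟪y, c x⟫ ≤ f u + ⟪y, c u⟫ :=
    convexOn_min_of_hasFDerivAt_zero hφconv (hL0 ▸ lagr_hasFDerivAt hf hc y x)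
  have hL0' : (fderiv ℝ f xp + (innerSL ℝ y').comp (fderiv ℝ c xp)) = 0 := by
    refine ContinuousLinearMap.ext fun d => ?_
    simpa [ContinuousLinearMap.add_apply, ContinuousLinearMap.comp_apply] using hy'stat d
  have hmin' : ∀ u, f xp + ⟪y', c xp⟫ ≤ f u + ⟪y', c u⟫ :=
    convexOn_min_of_hasFDerivAt_zero hφ'conv (hL0' ▸ lagr_hasFDerivAt hf hc y' xp)
  -- subgradient inequalities between the two points
  have in2 : r + (⟪y, c xp⟫ - ⟪y, c x⟫) ≤ r' := by
    have h := hysub (c xp)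
    rw [hr, hr', ← EReal.coe_add, EReal.coe_le_coe_iff, inner_sub_right] at h
    exact h
  have in2' : r' + (⟪y', c x⟫ - ⟪y', c xp⟫) ≤ r := by
    have h := hy'sub (c x)
    rw [hr', hr, ← EReal.coe_add, EReal.coe_le_coe_iff, inner_sub_right] at h
    exact h
  have in1 : f x + ⟪y, c x⟫ ≤ f xp + ⟪y, c xp⟫ := hmin xp
  have in1' : f xp + ⟪y', c xp⟫ ≤ f x + ⟪y', c x⟫ := hmin' x
  have key : f x + r = f xp + r' := by linarith
  have eq2 : ⟪y, c xp⟫ - r' = ⟪y, c x⟫ - r := by linarith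
  have eq1 : f xp + ⟪y, c xp⟫ = f x + ⟪y, c x⟫ := by linarith
  constructor
  · -- y is a subgradient of g at c xp
    intro z
    by_cases hz : g z = ⊤
    · rw [hz]; exact le_top
    · have ht : g z = ((g z).toReal : EReal) := (EReal.coe_toReal hz (hgp.2 z)).symm
      have h := hysub z
      rw [hr, ht, ← EReal.coe_add, EReal.coe_le_coe_iff, inner_sub_right] at h
      rw [hr', ht, ← EReal.coe_add, EReal.coe_le_coe_iff, inner_sub_right]
      linarith
  · -- stationarity at xp
    have hlocmin : IsLocalMin (fun u => f u + ⟪y, c u⟫) xp :=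
      Filter.Eventually.of_forall fun u => by
        calc f xp + ⟪y, c xp⟫ = f x + ⟪y, c x⟫ := eq1
        _ ≤ f u + ⟪y, c u⟫ := hmin u
    have hzero := hlocmin.hasFDerivAt_eq_zero (lagr_hasFDerivAt hf hc y xp)
    intro d
    have hd := DFunLike.congr_fun hzero d
    simpa [ContinuousLinearMap.add_apply, ContinuousLinearMap.comp_apply] using hd

/-- Any two stationary points of the problem share the same multiplier set. -/
theorem multiplier_sets_coincide {n m : ℕ} (f : Eu n → ℝ) (g : Eu m → EReal)
    (c : Eu n → Eu m)
    (hf : ContDiff ℝ 1 f) (hfc : ConvexOn ℝ Set.univ f)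
    (hgp : EProper g) (hglsc : LowerSemicontinuous g) (hgc : EConvexOn g)
    (hc : ContDiff ℝ 1 c) (hcK : HznConvex g c)
    (x xp : Eu n) (hx : (multSet f g c x).Nonempty) (hxp : (multSet f g c xp).Nonempty) :
    multSet f g c x = multSet f g c xp := by
  obtain ⟨yx, hyx⟩ := hx
  obtain ⟨yxp, hyxp⟩ := hxp
  apply Set.Subset.antisymm
  · exact fun y hy => multSet_subset hf hfc hgp hc hcK hy hyxp
  · exact fun y hy => multSet_subset hf hfc hgp hc hcK hy hyx
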